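/- Let $k$ be a field and define, for $b_1, \dots, b_{n-1} \in k^\times$, the map $D(b_1, \dots, b_{n-1}) := (b_1 \cdots b_{n-1}) \otimes (b_1 \wedge \cdots \wedge b_{n-1}) \in (k \otimes_{\mathbb{Z}} \wedge^{n-1} k^\times)/\mathcal{R}$ (extended by $0$ if some argument is $0$). Then $D$ is multilinear in the sense of derivations: $D(ab, b_2, \dots, b_{n-1}) = a \cdot D(b, b_2, \dots, b_{n-1}) + b \cdot D(a, b_2, \dots, b_{n-1})$ and $D(a + b, b_2, \dots, b_{n-1}) = D(a, b_2, \dots, b_{n-1}) + D(b, b_2, \dots, b_{n-1})$ for all $a, b \in k$ and $b_2, \dots, b_{n-1} \in k^\times$, and is alternating in its arguments. -/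

import Mathlib

set_option synthInstance.maxHeartbeats 400000
set_option maxHeartbeats 1000000

open TensorProduct
open scoped Classical

variable (k : Type*) [Field k]

/-- The wedge `b₁ ∧ ⋯ ∧ bₘ` in the `m`-th exterior power (over `ℤ`) of the
multiplicative group `kˣ` (written additively). -/
noncomputable def uWedge (m : ℕ) (b : Fin m → kˣ) : ⋀[ℤ]^m (Additive kˣ) :=
  ⟨ExteriorAlgebra.ιMulti ℤ m (fun i => Additive.ofMul (b i)),
    ExteriorAlgebra.ιMulti_range ℤ m (Set.mem_range_self _)⟩

/-- The element `a ⊗ (a ∧ b₁ ∧ ⋯ ∧ bₘ)`, interpreted as `0` when `a = 0`. -/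
noncomputable def relElt (m : ℕ) (a : k) (b : Fin m → kˣ) :
    k ⊗[ℤ] ⋀[ℤ]^(m + 1) (Additive kˣ) :=
  if h : a = 0 then 0 else a ⊗ₜ[ℤ] uWedge k (m + 1) (Fin.cons (Units.mk0 a h) b)

/-- The `k`-subspace `𝓡` spanned by
`a ⊗ (a ∧ b₁ ∧ ⋯) - (1+a) ⊗ ((1+a) ∧ b₁ ∧ ⋯)`. -/
noncomputable def relSubW (m : ℕ) : Submodule k (k ⊗[ℤ] ⋀[ℤ]^(m + 1) (Additive kˣ)) :=
  Submodule.span k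
    {x | ∃ (a : k) (b : Fin m → kˣ), x = relElt k m a b - relElt k m (1 + a) b}

/-- The map `D(b₁,…,b_{m+1}) = (b₁⋯b_{m+1}) ⊗ (b₁ ∧ ⋯ ∧ b_{m+1})` in
`(k ⊗[ℤ] ⋀^{m+1} kˣ)/𝓡`, extended by `0` if some argument vanishes. -/
noncomputable def Dmulti (m : ℕ) (v : Fin (m + 1) → k) :
    (k ⊗[ℤ] ⋀[ℤ]^(m + 1) (Additive kˣ)) ⧸ relSubW k m :=
  if h : ∀ i, v i ≠ 0 then
    Submodule.Quotient.mk
      ((∏ i, v i) ⊗ₜ[ℤ] uWedge k (m + 1) (fun i => Units.mk0 (v i) (h i)))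
  else 0

/-!
Fix units `b₁, …, bₘ` and write `g a` for the class of `a ⊗ (a ∧ b₁ ∧ ⋯ ∧ bₘ)` modulo `𝓡`.
Since the wedge is additive in `a ∈ kˣ`, `g` satisfies the Leibniz rule already before passing
to the quotient, and the relations say exactly `g (1 + d) = g d`. These two facts force
additivity: for `a ≠ 0` put `d = c / a`, so that
`g (a + c) = g (a (1 + d)) = a g d + (1 + d) g a = g (a d) + g a = g c + g a`.
Both rules pass to `D` because `D(a, b₁, …, bₘ) = (b₁ ⋯ bₘ) • g a`; the alternating property is
that of the wedge.
-/

theorem map_add_of_map_mul_of_map_one_add {K M : Type*} [Field K] [AddCommGroup M]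
    [Module K M] (g : K → M) (hmul : ∀ a c, g (a * c) = a • g c + c • g a)
    (hone : ∀ a, g (1 + a) = g a) (a c : K) : g (a + c) = g a + g c := by
  by_cases ha : a = 0
  · have hg0 : g 0 = 0 := by simpa using hmul 0 0
    rw [ha, zero_add, hg0, zero_add]
  obtain ⟨d, rfl⟩ : ∃ d, c = a * d := ⟨c / a, (mul_div_cancel₀ c ha).symm⟩
  calc g (a + a * d) = g (a * (1 + d)) := by rw [mul_one_add]
    _ = a • g d + (1 + d) • g a := by rw [hmul, hone]
    _ = g a + g (a * d) := by rw [hmul, add_smul, one_smul]; abel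

variable {k}

theorem uWedge_cons_mul (m : ℕ) (x y : kˣ) (b : Fin m → kˣ) :
    uWedge k (m + 1) (Fin.cons (x * y) b) =
      uWedge k (m + 1) (Fin.cons x b) + uWedge k (m + 1) (Fin.cons y b) := by
  apply Subtype.ext
  show ExteriorAlgebra.ιMulti ℤ (m + 1) (Additive.ofMul ∘ Fin.cons (x * y) b) =
    ExteriorAlgebra.ιMulti ℤ (m + 1) (Additive.ofMul ∘ Fin.cons x b) +
      ExteriorAlgebra.ιMulti ℤ (m + 1) (Additive.ofMul ∘ Fin.cons y b)
  simp only [Fin.comp_cons, ofMul_mul]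
  exact MultilinearMap.cons_add _ _ _ _

theorem uWedge_eq_zero_of_eq {m : ℕ} (b : Fin m → kˣ) {i j : Fin m} (hij : i ≠ j)
    (h : b i = b j) : uWedge k m b = 0 :=
  Subtype.ext (AlternatingMap.map_eq_zero_of_eq _ _ (congrArg Additive.ofMul h) hij)

theorem relElt_zero (m : ℕ) (b : Fin m → kˣ) : relElt k m 0 b = 0 :=
  dif_pos rfl

theorem relElt_of_ne_zero (m : ℕ) {a : k} (ha : a ≠ 0) (b : Fin m → kˣ) :
    relElt k m a b = a ⊗ₜ[ℤ] uWedge k (m + 1) (Fin.cons (Units.mk0 a ha) b) :=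
  dif_neg ha

theorem relElt_mul (m : ℕ) (a c : k) (b : Fin m → kˣ) :
    relElt k m (a * c) b = a • relElt k m c b + c • relElt k m a b := by
  rcases eq_or_ne a 0 with rfl | ha
  · simp [relElt_zero]
  rcases eq_or_ne c 0 with rfl | hc
  · simp [relElt_zero]
  rw [relElt_of_ne_zero m (mul_ne_zero ha hc), relElt_of_ne_zero m ha, relElt_of_ne_zero m hc,
    Units.mk0_mul, uWedge_cons_mul, tmul_add, smul_tmul', smul_tmul', smul_eq_mul,
    smul_eq_mul, mul_comm c a]
  exact add_comm _ _

theorem mkQ_relElt_one_add (m : ℕ) (a : k) (b : Fin m → kˣ) :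
    (relSubW k m).mkQ (relElt k m (1 + a) b) = (relSubW k m).mkQ (relElt k m a b) := by
  rw [eq_comm, Submodule.mkQ_apply, Submodule.mkQ_apply, Submodule.Quotient.eq]
  exact Submodule.subset_span ⟨a, b, rfl⟩

theorem mkQ_relElt_add (m : ℕ) (a c : k) (b : Fin m → kˣ) :
    (relSubW k m).mkQ (relElt k m (a + c) b) =
      (relSubW k m).mkQ (relElt k m a b) + (relSubW k m).mkQ (relElt k m c b) :=
  map_add_of_map_mul_of_map_one_add (fun a => (relSubW k m).mkQ (relElt k m a b))
    (fun a c => by simp only [relElt_mul, map_add, map_smul]) (mkQ_relElt_one_add m · b) a c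

theorem Dmulti_cons (m : ℕ) (a : k) {v : Fin m → k} (hv : ∀ i, v i ≠ 0) :
    Dmulti k m (Fin.cons a v) =
      (∏ i, v i) • (relSubW k m).mkQ (relElt k m a fun i => Units.mk0 (v i) (hv i)) := by
  rcases eq_or_ne a 0 with rfl | ha
  · rw [Dmulti, dif_neg fun h => h 0 rfl, relElt_zero, map_zero, smul_zero]
  have hcons : ∀ i, (Fin.cons a v : Fin (m + 1) → k) i ≠ 0 := Fin.cases ha hv
  have hunits : (fun i => Units.mk0 _ (hcons i)) =
      Fin.cons (Units.mk0 a ha) fun i => Units.mk0 (v i) (hv i) := by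
    ext i; cases i using Fin.cases <;> rfl
  rw [Dmulti, dif_pos hcons, hunits, relElt_of_ne_zero m ha, Submodule.mkQ_apply, ← Submodule.Quotient.mk_smul,
    smul_tmul', smul_eq_mul, Fin.prod_cons, mul_comm]

theorem Dmulti_eq_zero_of_eq {m : ℕ} {v : Fin (m + 1) → k} {i j : Fin (m + 1)} (hij : i ≠ j)
    (h : v i = v j) : Dmulti k m v = 0 := by
  unfold Dmulti
  split_ifs with hv
  · rw [uWedge_eq_zero_of_eq _ hij (Units.ext h), tmul_zero, Submodule.Quotient.mk_zero]
  · rfl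

/-- `D` is a derivation in each argument (stated in the first argument,
the other arguments being units) — multiplicative Leibniz rule and additivity — and it
is alternating in its arguments. (Here `n - 1 = m + 1`.) -/
theorem stmt4 (m : ℕ) :
    (∀ (a b : k) (v : Fin m → k), (∀ i, v i ≠ 0) →
      Dmulti k m (Fin.cons (a * b) v) =
        a • Dmulti k m (Fin.cons b v) + b • Dmulti k m (Fin.cons a v)) ∧
    (∀ (a b : k) (v : Fin m → k), (∀ i, v i ≠ 0) →
      Dmulti k m (Fin.cons (a + b) v) =
        Dmulti k m (Fin.cons a v) + Dmulti k m (Fin.cons b v)) ∧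
    (∀ (v : Fin (m + 1) → k) (i j : Fin (m + 1)), i ≠ j → v i = v j →
      Dmulti k m v = 0) := by
  refine ⟨fun a b v hv => ?_, fun a b v hv => ?_, fun v i j hij h => Dmulti_eq_zero_of_eq hij h⟩
  · rw [Dmulti_cons m _ hv, Dmulti_cons m _ hv, Dmulti_cons m _ hv, relElt_mul, map_add,
      map_smul, map_smul, smul_add, smul_comm a, smul_comm b]
  · rw [Dmulti_cons m _ hv, Dmulti_cons m _ hv, Dmulti_cons m _ hv, mkQ_relElt_add, smul_add]
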